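/- arXiv:1604.07465 — 3 statements merged into one kernel-verified Lean document; each statement's English description precedes it below -/
import Mathlib

section
/- For any tube size L×M, in the limit f→∞ the free energy of polygons in the tube satisfies lim_{f→∞} (F_T(f) − f/2) = 0. -/
open Filter Topology Real

/-- Theorem 3.5: for any tube size, `lim_{f→∞} (F_T(f) − f/2) = 0`, where
`F_T` is the tube free energy, bounded below via maximal-span polygons and
above by the half-space free energy `F`, which satisfies the same asymptote. -/
theorem stmt_6 (ZT Z : ℕ → ℝ → ℝ) (FT F : ℝ → ℝ) (c : ℝ) (hc : 0 < c)
    (hZTpos : ∀ n f, 0 < ZT n f)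
    (hZpos : ∀ n f, 0 < Z n f)
    (hFT : ∀ f : ℝ, Tendsto (fun n : ℕ => Real.log (ZT n f) / n) atTop (𝓝 (FT f)))
    (hF : ∀ f : ℝ, Tendsto (fun n : ℕ => Real.log (Z n f) / n) atTop (𝓝 (F f)))
    (hmaxspan : ∀ (f : ℝ) (n : ℕ), Even n → 4 ≤ n →
      Real.exp (f * ((n : ℝ) - 2) / 2) ≤ ZT n f)
    (hsub : ∀ (n : ℕ) (f : ℝ), ZT n f ≤ c * Z n f)
    (hhalf : Tendsto (fun f : ℝ => F f - f / 2) atTop (𝓝 0)) :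
    Tendsto (fun f : ℝ => FT f - f / 2) atTop (𝓝 0) := by
  -- Lower bound: f/2 ≤ FT f
  have hlow : ∀ f : ℝ, f / 2 ≤ FT f := by
    intro f
    have hsubseq : Tendsto (fun k : ℕ => (2 * k + 4 : ℕ)) atTop atTop := by
      apply tendsto_atTop_atTop.mpr
      intro b
      exact ⟨b, fun a ha => by omega⟩
    have h1 : Tendsto (fun k : ℕ => Real.log (ZT (2 * k + 4) f) / ((2 * k + 4 : ℕ) : ℝ))
        atTop (𝓝 (FT f)) := (hFT f).comp hsubseq
    have h2 : Tendsto (fun k : ℕ => f / 2 - f / ((2 * k + 4 : ℕ) : ℝ)) atTop (𝓝 (f / 2)) := by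
      have : Tendsto (fun k : ℕ => f / ((2 * k + 4 : ℕ) : ℝ)) atTop (𝓝 0) :=
        Tendsto.div_atTop tendsto_const_nhds
          (tendsto_natCast_atTop_atTop.comp hsubseq)
      simpa using (tendsto_const_nhds (x := f / 2)).sub this
    refine le_of_tendsto_of_tendsto' h2 h1 (fun k => ?_)
    set n : ℕ := 2 * k + 4 with hn
    have hnpos : (0 : ℝ) < (n : ℝ) := by positivity
    have hexp : Real.exp (f * ((n : ℝ) - 2) / 2) ≤ ZT n f :=
      hmaxspan f n ⟨k + 2, by omega⟩ (by omega)
    have hlog : f * ((n : ℝ) - 2) / 2 ≤ Real.log (ZT n f) := by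
      have := Real.log_le_log (Real.exp_pos _) hexp
      rwa [Real.log_exp] at this
    have hdiv : f * ((n : ℝ) - 2) / 2 / (n : ℝ) ≤ Real.log (ZT n f) / (n : ℝ) :=
      div_le_div_of_nonneg_right hlog hnpos.le
    have hrw : f * ((n : ℝ) - 2) / 2 / (n : ℝ) = f / 2 - f / (n : ℝ) := by
      field_simp
    linarith [hdiv, hrw ▸ hdiv]
  -- Upper bound: FT f ≤ F f
  have hup : ∀ f : ℝ, FT f ≤ F f := by
    intro f
    have hcast : Tendsto (fun n : ℕ => (n : ℝ)) atTop atTop := tendsto_natCast_atTop_atTop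
    have hc0 : Tendsto (fun n : ℕ => Real.log c / (n : ℝ)) atTop (𝓝 0) :=
      Tendsto.div_atTop tendsto_const_nhds hcast
    have h2 : Tendsto (fun n : ℕ => Real.log c / (n : ℝ) + Real.log (Z n f) / (n : ℝ))
        atTop (𝓝 (0 + F f)) := hc0.add (hF f)
    rw [zero_add] at h2
    refine le_of_tendsto_of_tendsto' (hFT f) h2 (fun n => ?_)
    rcases Nat.eq_zero_or_pos n with h0 | hpos
    · simp [h0]
    have hnpos : (0 : ℝ) < (n : ℝ) := by exact_mod_cast hpos
    have hlog : Real.log (ZT n f) ≤ Real.log c + Real.log (Z n f) := by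
      have := Real.log_le_log (hZTpos n f) (hsub n f)
      rwa [Real.log_mul (ne_of_gt hc) (ne_of_gt (hZpos n f))] at this
    rw [← add_div]
    exact div_le_div_of_nonneg_right hlog hnpos.le
  -- Squeeze
  refine tendsto_of_tendsto_of_tendsto_of_le_of_le tendsto_const_nhds hhalf
    (fun f => by linarith [hlow f]) (fun f => by linarith [hup f])
end

section
/- Suppose for all n, s: p_n(s) ≤ Σ_{s'=s}^{s+s0} p*_{n+n0}(s') for fixed nonnegative integers n0, s0, and also p*_n(s) ≤ p_n(s). If both free energies F(f) = lim (1/n) log Σ_s p_n(s)e^{fs} and F*(f) = lim (1/n) log Σ_s p*_n(s)e^{fs} exist, then F(f) = F*(f) for every f. -/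
open Filter Topology Real Finset

/-- Lemma 3.9-type statement: if `P* ⊆ P` (`p*_n(s) ≤ p_n(s)`) and every `P`
polygon converts to a `P*` polygon with `n0` extra edges and span increased by
at most `s0` (`p_n(s) ≤ Σ_{s'=s}^{s+s0} p*_{n+n0}(s')`), then the two free
energies coincide. -/
theorem stmt_8 (p ps : ℕ → ℕ → ℝ) (n0 s0 : ℕ) (F Fs : ℝ → ℝ)
    (hs0n0 : s0 ≤ n0)
    (hp : ∀ n s, 0 ≤ p n s)
    (hps : ∀ n s, 0 ≤ ps n s)
    (hsub : ∀ n s, ps n s ≤ p n s)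
    (hconv : ∀ n s, p n s ≤ ∑ s' ∈ Finset.Icc s (s + s0), ps (n + n0) s')
    (hsupp : ∀ n s, n < s → p n s = 0)
    (hF : ∀ f : ℝ, Tendsto
      (fun n : ℕ => Real.log (∑ s ∈ Finset.range (n + 1), p n s * Real.exp (f * s)) / n)
      atTop (𝓝 (F f)))
    (hFs : ∀ f : ℝ, Tendsto
      (fun n : ℕ => Real.log (∑ s ∈ Finset.range (n + 1), ps n s * Real.exp (f * s)) / n)
      atTop (𝓝 (Fs f))) :
    ∀ f : ℝ, F f = Fs f := by
  intro f
  set Z : ℕ → ℝ := fun n => ∑ s ∈ Finset.range (n + 1), p n s * Real.exp (f * s) with hZdef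
  set Zs : ℕ → ℝ := fun n => ∑ s ∈ Finset.range (n + 1), ps n s * Real.exp (f * s) with hZsdef
  have hFZ : Tendsto (fun n : ℕ => Real.log (Z n) / n) atTop (𝓝 (F f)) := hF f
  have hFZs : Tendsto (fun n : ℕ => Real.log (Zs n) / n) atTop (𝓝 (Fs f)) := hFs f
  have hZ0 : ∀ n, 0 ≤ Z n := fun n =>
    Finset.sum_nonneg fun s _ => mul_nonneg (hp n s) (Real.exp_nonneg _)
  have hZs0 : ∀ n, 0 ≤ Zs n := fun n =>
    Finset.sum_nonneg fun s _ => mul_nonneg (hps n s) (Real.exp_nonneg _)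
  have hZsZ : ∀ n, Zs n ≤ Z n := fun n =>
    Finset.sum_le_sum fun s _ => mul_le_mul_of_nonneg_right (hsub n s) (Real.exp_nonneg _)
  set C : ℝ := ((s0 : ℝ) + 1) * Real.exp (|f| * s0) with hCdef
  have hCpos : (0:ℝ) < C := by positivity
  -- key inequality
  have hA : ∀ n, Z n ≤ C * Zs (n + n0) := by
    intro n
    have h1 : Z n ≤ ∑ s ∈ Finset.range (n + 1),
        ∑ i ∈ Finset.range (s0 + 1), ps (n + n0) (s + i) * Real.exp (f * s) := by
      apply Finset.sum_le_sum
      intro s _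
      have := mul_le_mul_of_nonneg_right (hconv n s) (Real.exp_nonneg (f * s))
      refine this.trans_eq ?_
      rw [Finset.sum_mul]
      have hIcc : Finset.Icc s (s + s0) = (Finset.range (s0+1)).image (fun i => s + i) := by
        ext x
        simp only [Finset.mem_Icc, Finset.mem_image, Finset.mem_range, Nat.lt_succ_iff]
        constructor
        · intro h; exact ⟨x - s, by omega, by omega⟩
        · rintro ⟨i, hi, rfl⟩; omega
      rw [hIcc, Finset.sum_image (fun a _ b _ h => by omega)]
    have h2 : ∀ s ∈ Finset.range (n+1), ∀ i ∈ Finset.range (s0+1),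
        ps (n + n0) (s + i) * Real.exp (f * s)
          ≤ ps (n + n0) (s + i) * Real.exp (f * (s + i : ℕ)) * Real.exp (|f| * s0) := by
      intro s _ i hi
      rw [mul_assoc, ← Real.exp_add]
      apply mul_le_mul_of_nonneg_left _ (hps _ _)
      apply Real.exp_le_exp.2
      have hi' : (i : ℝ) ≤ (s0 : ℝ) := by
        exact_mod_cast Nat.lt_succ_iff.mp (Finset.mem_range.mp hi)
      have h3 := neg_abs_le f
      have h4 : (0:ℝ) ≤ (i:ℝ) := by positivity
      push_cast
      nlinarith [abs_nonneg f]
    have h3 : Z n ≤ ∑ i ∈ Finset.range (s0 + 1), ∑ s ∈ Finset.range (n + 1),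
        ps (n + n0) (s + i) * Real.exp (f * (s + i : ℕ)) * Real.exp (|f| * s0) := by
      rw [Finset.sum_comm]
      refine h1.trans (Finset.sum_le_sum fun s hs => Finset.sum_le_sum (h2 s hs))
    have h4 : ∀ i ∈ Finset.range (s0 + 1),
        ∑ s ∈ Finset.range (n + 1), ps (n + n0) (s + i) * Real.exp (f * (s + i : ℕ))
          ≤ Zs (n + n0) := by
      intro i hi
      have him : (Finset.range (n+1)).image (fun s => s + i) ⊆ Finset.range (n + n0 + 1) := by
        intro x hx
        simp only [Finset.mem_image, Finset.mem_range] at hx ⊢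
        obtain ⟨s, hs, rfl⟩ := hx
        have : i ≤ s0 := Nat.lt_succ_iff.mp (Finset.mem_range.mp hi)
        omega
      calc ∑ s ∈ Finset.range (n + 1), ps (n + n0) (s + i) * Real.exp (f * (s + i : ℕ))
          = ∑ x ∈ (Finset.range (n+1)).image (fun s => s + i),
              ps (n + n0) x * Real.exp (f * x) := by
            rw [Finset.sum_image]
            intro a _ b _ h
            have h' : a + i = b + i := h
            omega
        _ ≤ Zs (n + n0) := Finset.sum_le_sum_of_subset_of_nonneg him
            (fun x _ _ => mul_nonneg (hps _ _) (Real.exp_nonneg _))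
    calc Z n ≤ ∑ i ∈ Finset.range (s0 + 1), ∑ s ∈ Finset.range (n + 1),
          ps (n + n0) (s + i) * Real.exp (f * (s + i : ℕ)) * Real.exp (|f| * s0) := h3
      _ = ∑ i ∈ Finset.range (s0 + 1), (∑ s ∈ Finset.range (n + 1),
          ps (n + n0) (s + i) * Real.exp (f * (s + i : ℕ))) * Real.exp (|f| * s0) := by
          simp [Finset.sum_mul]
      _ ≤ ∑ i ∈ Finset.range (s0 + 1), Zs (n + n0) * Real.exp (|f| * s0) :=
          Finset.sum_le_sum fun i hi =>
            mul_le_mul_of_nonneg_right (h4 i hi) (Real.exp_nonneg _)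
      _ = C * Zs (n + n0) := by
          rw [Finset.sum_const, Finset.card_range, nsmul_eq_mul, hCdef]
          push_cast
          ring
  by_cases hfreq : ∃ᶠ m in atTop, Zs m = 0
  · -- both limits are 0
    have hZfreq : ∃ᶠ m in atTop, Z m = 0 := by
      rw [frequently_atTop] at hfreq ⊢
      intro N
      obtain ⟨m, hm, hz⟩ := hfreq (N + n0)
      refine ⟨m - n0, by omega, ?_⟩
      have h1 : m - n0 + n0 = m := by omega
      have h2 := hA (m - n0)
      rw [h1, hz, mul_zero] at h2
      exact le_antisymm h2 (hZ0 _)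
    obtain ⟨φ, hφ, hφ0⟩ := Filter.extraction_of_frequently_atTop hfreq
    obtain ⟨ψ, hψ, hψ0⟩ := Filter.extraction_of_frequently_atTop hZfreq
    have hFs0 : Fs f = 0 := by
      have h1 : Tendsto (fun k => Real.log (Zs (φ k)) / (φ k : ℝ)) atTop (𝓝 (Fs f)) :=
        hFZs.comp hφ.tendsto_atTop
      have h2 : (fun k => Real.log (Zs (φ k)) / (φ k : ℝ)) = fun _ => (0:ℝ) := by
        funext k; rw [hφ0 k, Real.log_zero, zero_div]
      rw [h2] at h1
      exact tendsto_nhds_unique h1 tendsto_const_nhds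
    have hF0 : F f = 0 := by
      have h1 : Tendsto (fun k => Real.log (Z (ψ k)) / (ψ k : ℝ)) atTop (𝓝 (F f)) :=
        hFZ.comp hψ.tendsto_atTop
      have h2 : (fun k => Real.log (Z (ψ k)) / (ψ k : ℝ)) = fun _ => (0:ℝ) := by
        funext k; rw [hψ0 k, Real.log_zero, zero_div]
      rw [h2] at h1
      exact tendsto_nhds_unique h1 tendsto_const_nhds
    rw [hF0, hFs0]
  · rw [Filter.not_frequently] at hfreq
    have hpos : ∀ᶠ m in atTop, 0 < Zs m :=
      hfreq.mono fun m hm => lt_of_le_of_ne (hZs0 m) (Ne.symm hm)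
    have h1 : Fs f ≤ F f := by
      refine le_of_tendsto_of_tendsto hFZs hFZ ?_
      filter_upwards [hpos] with m hm
      have hlog : Real.log (Zs m) ≤ Real.log (Z m) := Real.log_le_log hm (hZsZ m)
      have : (0:ℝ) ≤ (m:ℝ) := by positivity
      exact div_le_div_of_nonneg_right hlog this
    have hshift : Tendsto (fun n : ℕ => Real.log (Zs (n + n0)) / ((n + n0 : ℕ) : ℝ))
        atTop (𝓝 (Fs f)) := hFZs.comp (tendsto_add_atTop_nat n0)
    have hratio : Tendsto (fun n : ℕ => ((n + n0 : ℕ) : ℝ) / (n : ℝ)) atTop (𝓝 1) := by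
      have ha : Tendsto (fun n : ℕ => 1 + (n0 : ℝ) / (n : ℝ)) atTop (𝓝 1) := by
        have := tendsto_const_nhds.div_atTop
          (tendsto_natCast_atTop_atTop (R := ℝ)) (f := fun _ : ℕ => (n0:ℝ))
        simpa using (tendsto_const_nhds (x := (1:ℝ)) (f := atTop)).add this
      apply ha.congr'
      filter_upwards [eventually_ge_atTop 1] with n hn
      have hn' : (n : ℝ) ≠ 0 := by
        exact_mod_cast Nat.pos_iff_ne_zero.mp hn
      push_cast
      field_simp
    have hlogC : Tendsto (fun n : ℕ => Real.log C / (n : ℝ)) atTop (𝓝 0) :=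
      tendsto_const_nhds.div_atTop (tendsto_natCast_atTop_atTop (R := ℝ))
    have hRHS : Tendsto (fun n : ℕ => Real.log C / (n : ℝ) +
        Real.log (Zs (n + n0)) / ((n + n0 : ℕ) : ℝ) * (((n + n0 : ℕ) : ℝ) / (n : ℝ)))
        atTop (𝓝 (Fs f)) := by
      have := hlogC.add (hshift.mul hratio)
      simpa using this
    have h2 : F f ≤ Fs f := by
      refine le_of_tendsto_of_tendsto hFZ hRHS ?_
      filter_upwards [hpos, (tendsto_add_atTop_nat n0).eventually hpos,
        eventually_ge_atTop 1] with n hn hn' hn1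
      have hZpos : 0 < Z n := lt_of_lt_of_le hn (hZsZ n)
      have hnpos : (0:ℝ) < (n:ℝ) := by exact_mod_cast hn1
      have hlog : Real.log (Z n) ≤ Real.log C + Real.log (Zs (n + n0)) := by
        rw [← Real.log_mul (ne_of_gt hCpos) (ne_of_gt hn')]
        exact Real.log_le_log hZpos (hA n)
      have hm : ((n + n0 : ℕ) : ℝ) ≠ 0 := by positivity
      calc Real.log (Z n) / (n:ℝ) ≤ (Real.log C + Real.log (Zs (n + n0))) / (n:ℝ) :=
            div_le_div_of_nonneg_right hlog hnpos.le
        _ = Real.log C / (n:ℝ) +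
            Real.log (Zs (n + n0)) / ((n + n0 : ℕ) : ℝ) * (((n + n0 : ℕ) : ℝ) / (n:ℝ)) := by
            field_simp
    exact le_antisymm h2 h1
end

section
/- For any tube size L×M, in the limit f→−∞ the free energy satisfies lim_{f→−∞} (F_T(f) − f/W) = β^F_T / W, where β^F_T is the growth rate of full s-blocks and W = (L+1)(M+1). -/
open Filter Topology Real Set

/-- Theorem 3.10 (conditional form): if the span-density function `ST` is concave
on `(1/W, 1/2)` with boundary limit `β^F_T/W` at `(1/W)⁺`, and
`F_T(f) = sup_{1/W<ε<1/2}(ST ε + εf)`, then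
`lim_{f→−∞}(F_T(f) − f/W) = β^F_T/W`. -/
theorem stmt_12 (W βF : ℝ) (hW : 2 < W) (ST FT : ℝ → ℝ)
    (hconc : ConcaveOn ℝ (Set.Ioo (1 / W) (1 / 2)) ST)
    (hbdry : Tendsto ST (𝓝[>] (1 / W)) (𝓝 (βF / W)))
    (hF : ∀ f : ℝ, IsLUB ((fun ε => ST ε + ε * f) '' Set.Ioo (1 / W) (1 / 2)) (FT f)) :
    Tendsto (fun f : ℝ => FT f - f / W) atBot (𝓝 (βF / W)) := by
  have hW0 : (0:ℝ) < W := by linarith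
  have hI : 1 / W < 1 / 2 := by
    rw [div_lt_div_iff₀ hW0 two_pos]; linarith
  set l := βF / W with hl
  rw [Metric.tendsto_nhds]
  intro δ hδ
  have h1 : {ε | |ST ε - l| < δ/2} ∈ 𝓝[>] (1/W) := by
    have := Metric.tendsto_nhds.1 hbdry (δ/2) (by linarith)
    simp only [Real.dist_eq] at this; exact this
  rw [mem_nhdsGT_iff_exists_Ioo_subset] at h1
  obtain ⟨u, hu, hsub⟩ := h1
  simp only [Set.mem_Ioi] at hu
  obtain ⟨ε₀, hε₀def⟩ : ∃ x : ℝ, x = min u ((1/W + 1/2)/2) := ⟨_, rfl⟩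
  have hε₀1 : 1/W < ε₀ := hε₀def ▸ lt_min hu (by linarith)
  have hε₀2 : ε₀ < 1/2 := hε₀def ▸ lt_of_le_of_lt (min_le_right _ _) (by linarith)
  have hε₀u : ε₀ ≤ u := hε₀def ▸ min_le_left _ _
  obtain ⟨C, hCdef⟩ : ∃ x : ℝ, x = FT 0 := ⟨_, rfl⟩
  have hC : ∀ ε ∈ Set.Ioo (1/W) (1/2), ST ε ≤ C := by
    intro ε hε
    have := (hF 0).1 ⟨ε, hε, rfl⟩
    rw [hCdef]
    simpa using this
  filter_upwards [eventually_le_atBot (min (-1) ((l + δ/2 - C)/(ε₀ - 1/W)))] with f hf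
  have hf1 : f ≤ -1 := le_trans hf (min_le_left _ _)
  have hf2 : f ≤ (l + δ/2 - C)/(ε₀ - 1/W) := le_trans hf (min_le_right _ _)
  have hfneg : f < 0 := by linarith
  have hd : (0:ℝ) < ε₀ - 1/W := by linarith
  have hf2' : (ε₀ - 1/W) * f ≤ l + δ/2 - C := by
    have := (le_div_iff₀ hd).1 hf2
    linarith
  have hfw : f/W = (1/W)*f := by ring
  -- upper bound
  have hupper : FT f ≤ l + δ/2 + f/W := by
    refine (hF f).2 ?_
    rintro y ⟨ε, ⟨hεa, hεb⟩, rfl⟩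
    by_cases hcase : ε < ε₀
    · have h3 : |ST ε - l| < δ/2 := hsub ⟨hεa, lt_of_lt_of_le hcase hε₀u⟩
      have h4 : ST ε < l + δ/2 := by
        have := abs_lt.1 h3; linarith [this.2]
      have h5 : ε * f ≤ (1/W) * f := by nlinarith
      simp only []
      linarith
    · push_neg at hcase
      have h4 : ST ε ≤ C := hC ε ⟨hεa, hεb⟩
      have h5 : ε * f ≤ ε₀ * f := by nlinarith
      have h6 : ε₀ * f = (ε₀ - 1/W)*f + (1/W)*f := by ring
      simp only []
      linarith
  -- lower bound
  have hnf : (0:ℝ) < -f := by linarith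
  have hmpos : 0 < min (δ/(2*(-f))) ((ε₀ - 1/W)/2) :=
    lt_min (div_pos hδ (by linarith)) (by linarith)
  obtain ⟨ε, hεdef⟩ : ∃ x : ℝ, x = 1/W + min (δ/(2*(-f))) ((ε₀ - 1/W)/2) := ⟨_, rfl⟩
  have hε1 : 1/W < ε := by rw [hεdef]; linarith
  have hεlt : ε < ε₀ := by
    have h7 := min_le_right (δ/(2*(-f))) ((ε₀-1/W)/2)
    rw [hεdef]; linarith
  have hεI : ε ∈ Set.Ioo (1/W) (1/2) := ⟨hε1, hεlt.trans hε₀2⟩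
  have hmem : |ST ε - l| < δ/2 := hsub ⟨hε1, lt_of_lt_of_le hεlt hε₀u⟩
  have hST : l - δ/2 < ST ε := by
    have := abs_lt.1 hmem; linarith [this.1]
  have h6 : ε - 1/W ≤ δ/(2*(-f)) := by
    rw [hεdef]; simpa using min_le_left (δ/(2*(-f))) ((ε₀-1/W)/2)
  have h6' : (ε - 1/W) * (2*(-f)) ≤ δ := (le_div_iff₀ (by linarith : (0:ℝ) < 2*(-f))).1 h6
  have hsmall : (ε - 1/W) * (-f) ≤ δ/2 := by
    have hr : (ε - 1/W) * (2*(-f)) = 2*((ε - 1/W)*(-f)) := by ring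
    linarith [hr ▸ h6']
  have hlow : ST ε + ε * f ≤ FT f := (hF f).1 ⟨ε, hεI, rfl⟩
  have hkey : -(δ/2) ≤ (ε - 1/W)*f := by nlinarith
  have hring : ε*f = (ε - 1/W)*f + (1/W)*f := by ring
  rw [Real.dist_eq, abs_lt]
  constructor <;> linarith
end
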